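/- arXiv:1602.01590 — 6 statements merged into one kernel-verified Lean document; each statement's English description precedes it below -/
import Mathlib

section
/- If S is a proper subalgebra of a (not necessarily associative) algebra A with dim A > 1 over a field F, and A = S + Ann(A) where Ann(A) = {x ∈ A : xA = Ax = 0}, then A is decomposable, i.e., A is a direct sum of two nonzero ideals. -/
/-- The multiplication of a (not necessarily associative) `F`-algebra structure on `A`,
given as a bilinear map. -/
abbrev Mul2 (F A : Type*) [Field F] [AddCommGroup A] [Module F A] :=
  A →ₗ[F] A →ₗ[F] A

variable {F A : Type*} [Field F] [AddCommGroup A] [Module F A]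

/-- A submodule is an ideal if it absorbs multiplication on both sides. -/
def IsIdeal (m : Mul2 F A) (I : Submodule F A) : Prop :=
  ∀ x ∈ I, ∀ y : A, m x y ∈ I ∧ m y x ∈ I

/-- An algebra is decomposable if it is the direct sum of two nonzero ideals. -/
def Decomposable (m : Mul2 F A) : Prop :=
  ∃ I J : Submodule F A, IsIdeal m I ∧ IsIdeal m J ∧ I ≠ ⊥ ∧ J ≠ ⊥ ∧
    I ⊓ J = ⊥ ∧ I ⊔ J = ⊤

/-- The set of `x` with `x A ⊆ N` and `A x ⊆ N`, as a submodule. -/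
def annOver (m : Mul2 F A) (N : Submodule F A) : Submodule F A where
  carrier := {x | ∀ y : A, m x y ∈ N ∧ m y x ∈ N}
  add_mem' := by
    intro a b ha hb y
    constructor
    · simpa using N.add_mem (ha y).1 (hb y).1
    · simpa using N.add_mem (ha y).2 (hb y).2
  zero_mem' := by intro y; simp
  smul_mem' := by
    intro c a ha y
    constructor
    · simpa using N.smul_mem c (ha y).1
    · simpa using N.smul_mem c (ha y).2

/-- The annihilator `{x | xA = Ax = 0}`. -/
def annA (m : Mul2 F A) : Submodule F A := annOver m ⊥

/-- The upper annihilating series: `Ann⁰ = 0`, `Annⁱ/Annⁱ⁻¹ = Ann(A/Annⁱ⁻¹)`. -/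
def annSeries (m : Mul2 F A) : ℕ → Submodule F A
  | 0 => ⊥
  | (k+1) => annOver m (annSeries m k)

/-- The span of all products of elements of `I` with elements of `J`. -/
def mulSub (m : Mul2 F A) (I J : Submodule F A) : Submodule F A :=
  Submodule.span F {z | ∃ x ∈ I, ∃ y ∈ J, z = m x y}

/-- `A²`, the span of all products. -/
def sqA (m : Mul2 F A) : Submodule F A := mulSub m ⊤ ⊤

/-- Right powers: `rpow 0 = A = A^{<1>}`, `rpow (k+1) = (rpow k) · A`. -/
def rpow (m : Mul2 F A) : ℕ → Submodule F A
  | 0 => ⊤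
  | (k+1) => mulSub m (rpow m k) ⊤

/-- Full powers: `apow 0 = A = A¹`, `apow (k+1) = Σ_{i+j=k} (apow i)(apow j)`,
i.e. `A^{k+2} = Σ_{i=1}^{k+1} Aⁱ A^{k+2-i}`. -/
def apow (m : Mul2 F A) : ℕ → Submodule F A
  | 0 => ⊤
  | (k+1) => ⨆ i : Fin (k+1), mulSub m (apow m i.1) (apow m (k - i.1))
  decreasing_by
  · exact i.2
  · exact Nat.lt_succ_of_le (Nat.sub_le _ _)

/-- `A` is nilpotent: `Aⁿ = 0` for some `n`. -/
def IsNilpotentAlg (m : Mul2 F A) : Prop := ∃ n, apow m n = ⊥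

/-- `A` is right nilpotent: `A^{<n>} = 0` for some `n`. -/
def IsRightNilpotentAlg (m : Mul2 F A) : Prop := ∃ n, rpow m n = ⊥

/-- A basis is natural if products of distinct basis vectors vanish. -/
def NaturalBasis (m : Mul2 F A) {ι : Type*} (bs : Module.Basis ι F A) : Prop :=
  ∀ i j, i ≠ j → m (bs i) (bs j) = 0

/-- An evolution algebra: commutative with some finite natural basis. -/
def IsEvolutionAlg (m : Mul2 F A) : Prop :=
  (∀ x y, m x y = m y x) ∧
  ∃ (ι : Type) (_ : Fintype ι) (bs : Module.Basis ι F A), NaturalBasis m bs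

/-- The set of `x` with `x N = 0`, as a submodule. -/
def annIn (m : Mul2 F A) (N : Submodule F A) : Submodule F A where
  carrier := {x | ∀ y ∈ N, m x y = 0}
  add_mem' := by
    intro a b ha hb y hy
    simp [ha y hy, hb y hy]
  zero_mem' := by intro y hy; simp
  smul_mem' := by
    intro c a ha y hy
    simp [ha y hy]


/-!
Since `Ann(A)` multiplies everything to zero, `A S + S A = S S ⊆ S`, so `S` is an ideal, and so is
every subspace of `Ann(A)`. A complement of `S ∩ Ann(A)` inside `Ann(A)` is then a complementary
ideal to `S`, nonzero because `S` is proper. If `S = 0`, the multiplication vanishes and any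
nonzero proper subspace, which exists as `dim A > 1`, takes the place of `S`.
-/

theorem exists_le_disjoint_sup_eq_sup {α : Type*} [Lattice α] [IsModularLattice α]
    [BoundedOrder α] [ComplementedLattice α] (a b : α) :
    ∃ c ≤ b, Disjoint a c ∧ a ⊔ c = a ⊔ b := by
  obtain ⟨c, hdisj, hsup⟩ :=
    IsModularLattice.exists_disjoint_and_sup_eq (inf_le_right : a ⊓ b ≤ b)
  have hcb : c ≤ b := hsup ▸ le_sup_right
  refine ⟨c, hcb, ?_, ?_⟩
  · rw [disjoint_iff, ← inf_eq_right.mpr hcb, ← inf_assoc]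
    exact hdisj.eq_bot
  · rw [← hsup, ← sup_assoc, sup_inf_self]

section

variable {m : Mul2 F A}

theorem mem_annA_iff {x : A} : x ∈ annA m ↔ ∀ y, m x y = 0 ∧ m y x = 0 := by
  simp only [annA, annOver, Submodule.mem_mk, AddSubmonoid.mem_mk, AddSubsemigroup.mem_mk,
    Set.mem_ofPred_eq, Submodule.mem_bot]

theorem isIdeal_of_le_annA {I : Submodule F A} (hI : I ≤ annA m) : IsIdeal m I := by
  intro x hx y
  obtain ⟨hxy, hyx⟩ := mem_annA_iff.mp (hI hx) y
  rw [hxy, hyx]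
  exact ⟨I.zero_mem, I.zero_mem⟩

theorem isIdeal_of_sup_annA_eq_top {S : Submodule F A} (hclosed : ∀ x ∈ S, ∀ y ∈ S, m x y ∈ S)
    (hsum : S ⊔ annA m = ⊤) : IsIdeal m S := by
  intro x hx y
  obtain ⟨s, hs, n, hn, rfl⟩ := Submodule.mem_sup.mp (hsum ▸ Submodule.mem_top : y ∈ S ⊔ annA m)
  obtain ⟨hnx, hxn⟩ := mem_annA_iff.mp hn x
  rw [map_add, LinearMap.map_add₂, hxn, hnx, add_zero, add_zero]
  exact ⟨hclosed x hx s hs, hclosed s hs x hx⟩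

theorem decomposable_of_isIdeal_of_sup_annA_eq_top {I : Submodule F A} (hI : IsIdeal m I)
    (hbot : I ≠ ⊥) (htop : I ≠ ⊤) (hsum : I ⊔ annA m = ⊤) : Decomposable m := by
  obtain ⟨C, hCann, hdisj, hsup⟩ := exists_le_disjoint_sup_eq_sup I (annA m)
  rw [hsum] at hsup
  refine ⟨I, C, hI, isIdeal_of_le_annA hCann, hbot, ?_, hdisj.eq_bot, hsup⟩
  rintro rfl
  exact htop (sup_bot_eq I ▸ hsup)

theorem exists_submodule_ne_bot_ne_top (h : 1 < Module.rank F A) :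
    ∃ I : Submodule F A, I ≠ ⊥ ∧ I ≠ ⊤ := by
  have : Nontrivial A := rank_pos_iff_nontrivial.mp (one_pos.trans h)
  obtain ⟨x, hx⟩ := exists_ne (0 : A)
  refine ⟨F ∙ x, by simpa [Submodule.span_singleton_eq_bot] using hx, fun htop => ?_⟩
  have hle := rank_span_le (R := F) ({x} : Set A)
  rw [htop, rank_top, Cardinal.mk_singleton] at hle
  exact hle.not_gt h

end

/-- If `S` is a proper subalgebra of `A`, `dim A > 1`, and `A = S + Ann(A)`,
then `A` is decomposable. -/
theorem stmt0 {F A : Type*} [Field F] [AddCommGroup A] [Module F A]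
    (m : Mul2 F A) (hdim : 1 < Module.rank F A)
    (S : Submodule F A) (hclosed : ∀ x ∈ S, ∀ y ∈ S, m x y ∈ S)
    (hproper : S ≠ ⊤) (hsum : S ⊔ annA m = ⊤) :
    Decomposable m := by
  by_cases hSbot : S = ⊥
  · obtain ⟨I, hIbot, hItop⟩ := exists_submodule_ne_bot_ne_top hdim
    have hann : annA m = ⊤ := by rwa [hSbot, bot_sup_eq] at hsum
    exact decomposable_of_isIdeal_of_sup_annA_eq_top (isIdeal_of_le_annA (hann ▸ le_top))
      hIbot hItop (by rw [hann, sup_top_eq])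
  · exact decomposable_of_isIdeal_of_sup_annA_eq_top
      (isIdeal_of_sup_annA_eq_top hclosed hsum) hSbot hproper hsum
end

section
/- A finite-dimensional commutative nonassociative algebra is nilpotent if and only if it is right nilpotent, where right nilpotency means A^{<n>} = 0 for some n with A^{<1>} = A and A^{<k+1>} = A^{<k>}A, and nilpotency means Aⁿ = 0 for some n with A¹ = A and A^{k+1} = Σ_{i=1}^{k} Aⁱ A^{k+1-i}. -/
variable {F A : Type*} [Field F] [AddCommGroup A] [Module F A]

/-!
Every right power `A^{<k>}` lies in `Aᵏ`. Conversely, commutativity puts each product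
`Aⁱ Aʲ` inside `A^{max(i,j)} A`, and `max(i,j) ≥ (i+j)/2`; by induction, `Aʲ ⊆ A^{<n+1>}` as soon as
`2ⁿ ≤ j`, so `A^{<n+1>} = 0` forces `A^{2ⁿ} = 0`.
-/

section mulSub

variable {m : Mul2 F A}

lemma mulSub_le_iff {I J N : Submodule F A} :
    mulSub m I J ≤ N ↔ ∀ x ∈ I, ∀ y ∈ J, m x y ∈ N := by
  rw [mulSub, Submodule.span_le]
  constructor
  · intro h x hx y hy
    exact h ⟨x, hx, y, hy, rfl⟩
  · rintro h z ⟨x, hx, y, hy, rfl⟩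
    exact h x hx y hy

lemma mem_mulSub {I J : Submodule F A} {x y : A} (hx : x ∈ I) (hy : y ∈ J) :
    m x y ∈ mulSub m I J :=
  Submodule.subset_span ⟨x, hx, y, hy, rfl⟩

lemma mulSub_mono {I I' J J' : Submodule F A} (hI : I ≤ I') (hJ : J ≤ J') :
    mulSub m I J ≤ mulSub m I' J' :=
  mulSub_le_iff.2 fun _ hx _ hy => mem_mulSub (hI hx) (hJ hy)

lemma mulSub_comm (hcomm : ∀ x y, m x y = m y x) (I J : Submodule F A) :
    mulSub m I J = mulSub m J I :=
  le_antisymm (mulSub_le_iff.2 fun x hx y hy => hcomm x y ▸ mem_mulSub hy hx)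
    (mulSub_le_iff.2 fun x hx y hy => hcomm x y ▸ mem_mulSub hy hx)

end mulSub

lemma rpow_zero (m : Mul2 F A) : rpow m 0 = ⊤ := rfl

lemma rpow_succ (m : Mul2 F A) (n : ℕ) : rpow m (n + 1) = mulSub m (rpow m n) ⊤ := rfl

lemma apow_zero (m : Mul2 F A) : apow m 0 = ⊤ := by
  rw [apow]

lemma apow_succ (m : Mul2 F A) (k : ℕ) :
    apow m (k + 1) = ⨆ i : Fin (k + 1), mulSub m (apow m i) (apow m (k - i)) := by
  rw [apow]

lemma rpow_le_apow (m : Mul2 F A) (k : ℕ) : rpow m k ≤ apow m k := by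
  induction k with
  | zero => rw [apow_zero]; exact le_top
  | succ k ih =>
    rw [apow_succ, rpow_succ]
    refine le_trans ?_ (le_iSup _ (Fin.last k))
    simpa only [Fin.val_last, Nat.sub_self, apow_zero] using mulSub_mono ih le_rfl

lemma apow_le_rpow_of_two_pow_le {m : Mul2 F A} (hcomm : ∀ x y, m x y = m y x) {k n : ℕ}
    (h : 2 ^ n ≤ k + 1) : apow m k ≤ rpow m n := by
  induction k using Nat.strong_induction_on generalizing n with
  | _ k ih =>
    rcases n with _ | n
    · exact rpow_zero m ▸ le_top
    rcases k with _ | k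
    · have : 2 ≤ 2 ^ (n + 1) := Nat.le_self_pow n.succ_ne_zero 2
      omega
    have h_factor : ∀ j ≤ k, k ≤ 2 * j → ∀ J, mulSub m (apow m j) J ≤ rpow m (n + 1) :=
      fun j hjk hkj J => mulSub_mono (ih j (by omega) (by rw [pow_succ] at h; omega)) le_top
    rw [apow_succ]
    refine iSup_le fun i => ?_
    have hi : (i : ℕ) ≤ k := Nat.lt_succ_iff.1 i.2
    rcases le_total (k - i) i with hle | hle
    · exact h_factor i hi (by omega) _
    · exact mulSub_comm hcomm _ (apow m i) ▸ h_factor (k - i) (Nat.sub_le k i) (by omega) _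

theorem stmt4_general {F A : Type*} [Field F] [AddCommGroup A] [Module F A]
    (m : Mul2 F A) (hcomm : ∀ x y, m x y = m y x) :
    IsNilpotentAlg m ↔ IsRightNilpotentAlg m := by
  constructor
  · rintro ⟨n, hn⟩
    exact ⟨n, le_bot_iff.1 (hn ▸ rpow_le_apow m n)⟩
  · rintro ⟨n, hn⟩
    refine ⟨2 ^ n - 1, le_bot_iff.1 (hn ▸ apow_le_rpow_of_two_pow_le hcomm ?_)⟩
    have := Nat.one_le_two_pow (n := n)
    omega

/-- A finite-dimensional commutative nonassociative algebra is nilpotent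
if and only if it is right nilpotent. -/
theorem stmt4 {F A : Type*} [Field F] [AddCommGroup A] [Module F A]
    [FiniteDimensional F A] (m : Mul2 F A) (hcomm : ∀ x y, m x y = m y x) :
    IsNilpotentAlg m ↔ IsRightNilpotentAlg m :=
  stmt4_general m hcomm
end

section
/- Let E be a finite-dimensional nilpotent evolution algebra with natural basis B. Then Ann²(E) = span{e ∈ B : e² ∈ Ann(E)}, where Ann²(E) is the second term of the upper annihilating series, i.e., Ann²(E)/Ann(E) = Ann(E/Ann(E)). -/
variable {F A : Type*} [Field F] [AddCommGroup A] [Module F A]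

/-! Since the algebra is commutative, `x ∈ annOver m N` just says `x E ⊆ N`, and it suffices to
test this on the natural basis. There `x eᵢ = xᵢ eᵢ²` with `xᵢ` the `i`-th coordinate of `x`, so
`x E ⊆ N` exactly when every `eᵢ` occurring in `x` has `eᵢ² ∈ N`. Taking `N = Ann(E)` gives
`Ann²(E)`. -/

namespace NaturalBasis

variable {ι : Type*} {m : Mul2 F A} {bs : Module.Basis ι F A}

theorem mul_basis (hnat : NaturalBasis m bs) (x : A) (i : ι) :
    m x (bs i) = bs.repr x i • m (bs i) (bs i) := by
  suffices m.flip (bs i) = (bs.coord i).smulRight (m (bs i) (bs i)) from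
    LinearMap.congr_fun this x
  refine bs.ext fun j => ?_
  rcases eq_or_ne j i with rfl | hji
  · simp
  · simp [hnat j i hji, Finsupp.single_eq_of_ne' hji]

theorem mem_annOver_iff (hcomm : ∀ x y, m x y = m y x) (hnat : NaturalBasis m bs)
    (N : Submodule F A) (x : A) :
    x ∈ annOver m N ↔ ∀ i, bs.repr x i ≠ 0 → m (bs i) (bs i) ∈ N := by
  have mul_mem_iff : (∀ y, m x y ∈ N) ↔ ∀ i, m x (bs i) ∈ N := by
    refine ⟨fun h i => h _, fun h y => ?_⟩
    have hspan : Submodule.span F (Set.range bs) ≤ N.comap (m x) :=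
      Submodule.span_le.2 (Set.range_subset_iff.2 h)
    exact hspan (bs.span_eq ▸ Submodule.mem_top)
  have right_mul_mem_iff : (∀ y, m x y ∈ N ∧ m y x ∈ N) ↔ ∀ y, m x y ∈ N :=
    forall_congr' fun y => by rw [hcomm y x, and_self]
  change (∀ y, m x y ∈ N ∧ m y x ∈ N) ↔ _
  rw [right_mul_mem_iff, mul_mem_iff]
  refine forall_congr' fun i => ?_
  rw [hnat.mul_basis]
  refine ⟨fun h hi => (N.smul_mem_iff hi).1 h, fun h => ?_⟩
  rcases eq_or_ne (bs.repr x i) 0 with hi | hi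
  · simp [hi]
  · exact N.smul_mem _ (h hi)

theorem annOver_eq_span (hcomm : ∀ x y, m x y = m y x) (hnat : NaturalBasis m bs)
    (N : Submodule F A) :
    annOver m N = Submodule.span F (bs '' {i | m (bs i) (bs i) ∈ N}) := by
  ext x
  rw [hnat.mem_annOver_iff hcomm, bs.mem_span_image]
  exact ⟨fun h i hi => h i (Finsupp.mem_support_iff.1 hi),
    fun h i hi => h (Finsupp.mem_support_iff.2 hi)⟩

end NaturalBasis

theorem stmt6_general {F E : Type*} [Field F] [AddCommGroup E] [Module F E]
    (m : Mul2 F E) (hcomm : ∀ x y, m x y = m y x)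
    {ι : Type*} (bs : Module.Basis ι F E) (hnat : NaturalBasis m bs) :
    annSeries m 2 =
      Submodule.span F (⇑bs '' {i | m (bs i) (bs i) ∈ annSeries m 1}) :=
  hnat.annOver_eq_span hcomm (annSeries m 1)

/-- For a finite-dimensional nilpotent evolution algebra with natural basis `bs`,
`Ann²(E)` is the span of the basis vectors whose square lies in `Ann(E)`. -/
theorem stmt6 {F E : Type*} [Field F] [AddCommGroup E] [Module F E]
    [FiniteDimensional F E] (m : Mul2 F E) (hcomm : ∀ x y, m x y = m y x)
    (hnil : IsNilpotentAlg m)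
    {ι : Type*} [Fintype ι] (bs : Module.Basis ι F E) (hnat : NaturalBasis m bs) :
    annSeries m 2 =
      Submodule.span F (⇑bs '' {i | m (bs i) (bs i) ∈ annSeries m 1}) :=
  stmt6_general m hcomm bs hnat
end

section
/- Let U be a finite-dimensional vector space over a field F of characteristic ≠ 2 with a nondegenerate symmetric bilinear form b. Define E(U,b) = U × F with multiplication (u,α)(v,β) = (0, b(u,v)). Then E(U,b) is a nilpotent evolution algebra with Ann(E) = 0 × F and Ann²(E) = E. -/
variable {F A : Type*} [Field F] [AddCommGroup A] [Module F A]

variable {F U : Type*} [Field F] [AddCommGroup U] [Module F U]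

/-- Multiplication of `E(U,b) = U × F`: `(u,α)(v,β) = (0, b(u,v))`. -/
noncomputable def mulP (b : U →ₗ[F] U →ₗ[F] F) :
    (U × F) →ₗ[F] (U × F) →ₗ[F] (U × F) :=
  LinearMap.mk₂ F (fun p q => (0, b p.1 q.1))
    (fun p p' q => by simp [Prod.ext_iff])
    (fun c p q => by simp [Prod.ext_iff])
    (fun p q q' => by simp [Prod.ext_iff])
    (fun c p q => by simp [Prod.ext_iff])

/-- Multiplication of `E(U,b,g) = U × F × F`. -/
noncomputable def mulT (b : U →ₗ[F] U →ₗ[F] F) (g : U →ₗ[F] U) :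
    (U × F × F) →ₗ[F] (U × F × F) →ₗ[F] (U × F × F) :=
  LinearMap.mk₂ F (fun p q => (0, b p.1 q.1, b (g p.1) q.1 + p.2.1 * q.2.1))
    (fun p p' q => by simp [Prod.ext_iff, add_mul]; ring)
    (fun c p q => by simp [Prod.ext_iff, smul_eq_mul]; ring)
    (fun p q q' => by simp [Prod.ext_iff, mul_add]; ring)
    (fun c p q => by simp [Prod.ext_iff, smul_eq_mul]; ring)

/-- Multiplication of `E(U,b,u) = F × U × F`: `(α,x,β)(γ,y,δ) = (0, αγ·u, b(x,y))`. -/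
noncomputable def mulG (b : U →ₗ[F] U →ₗ[F] F) (u : U) :
    (F × U × F) →ₗ[F] (F × U × F) →ₗ[F] (F × U × F) :=
  LinearMap.mk₂ F (fun p q => (0, (p.1 * q.1) • u, b p.2.1 q.2.1))
    (fun p p' q => by simp [Prod.ext_iff, add_mul, add_smul])
    (fun c p q => by simp [Prod.ext_iff, smul_eq_mul, mul_assoc, smul_smul])
    (fun p q q' => by simp [Prod.ext_iff, mul_add, add_smul])
    (fun c p q => by simp [Prod.ext_iff, smul_eq_mul, smul_smul, mul_left_comm])

/-- Multiplication of `E(U,b,f,g) = U × F × F × F`. -/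
noncomputable def mulQ (b : U →ₗ[F] U →ₗ[F] F) (f g : U →ₗ[F] U) :
    (U × F × F × F) →ₗ[F] (U × F × F × F) →ₗ[F] (U × F × F × F) :=
  LinearMap.mk₂ F (fun p q =>
      (0, b p.1 q.1, b (f p.1) q.1 + p.2.1 * q.2.1, b (g p.1) q.1 + p.2.2.1 * q.2.2.1))
    (fun p p' q => by simp [Prod.ext_iff, add_mul]; constructor <;> ring)
    (fun c p q => by simp [Prod.ext_iff, smul_eq_mul]; constructor <;> ring)
    (fun p q q' => by simp [Prod.ext_iff, mul_add]; constructor <;> ring)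
    (fun c p q => by simp [Prod.ext_iff, smul_eq_mul]; constructor <;> ring)


/-! Every product of `E(U,b)` lies in the line `0 × F`, and that line multiplies everything to
zero; hence `E³ = 0` and `Ann²(E) = E`. Nondegeneracy of `b` cuts `Ann(E)` down to exactly that
line, and an orthogonal basis of `(U, b)`, which exists since `2` is invertible, together with
`(0, 1)` is a natural basis. -/

section

variable (b : U →ₗ[F] U →ₗ[F] F)

@[simp]
theorem mulP_apply (p q : U × F) : mulP b p q = (0, b p.1 q.1) := rfl

theorem mulP_comm (hsymm : ∀ x y, b x y = b y x) (p q : U × F) :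
    mulP b p q = mulP b q p := by
  simp [hsymm p.1]

theorem mulP_mem_prod_bot_top (p q : U × F) :
    mulP b p q ∈ (⊥ : Submodule F U).prod ⊤ := by
  simp [Submodule.mem_prod]

theorem naturalBasis_mulP_prod_singleton {ι : Type*} {v : Module.Basis ι F U}
    (hv : b.IsOrthoᵢ v) : NaturalBasis (mulP b) (v.prod (Module.Basis.singleton Unit F)) := by
  rintro (i | i) (j | j) hij <;>
    simp only [mulP_apply, Module.Basis.prod_apply_inl_fst, Module.Basis.prod_apply_inr_fst,
      map_zero, LinearMap.zero_apply, Prod.mk_zero_zero]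
  exact congrArg _ (hv fun h => hij (congrArg Sum.inl h))

theorem isEvolutionAlg_mulP [Invertible (2 : F)] [FiniteDimensional F U]
    (hsymm : ∀ x y, b x y = b y x) : IsEvolutionAlg (mulP b) := by
  obtain ⟨v, hv⟩ := LinearMap.BilinForm.exists_orthogonal_basis (B := b) ⟨hsymm⟩
  exact ⟨mulP_comm b hsymm, _, inferInstance, _, naturalBasis_mulP_prod_singleton b hv⟩

theorem mulSub_mulP_le (I J : Submodule F (U × F)) :
    mulSub (mulP b) I J ≤ (⊥ : Submodule F U).prod ⊤ :=
  Submodule.span_le.2 fun _ ⟨p, _, q, _, h⟩ => h ▸ mulP_mem_prod_bot_top b p q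

theorem mulSub_mulP_eq_bot_of_le_left {I : Submodule F (U × F)}
    (hI : I ≤ (⊥ : Submodule F U).prod ⊤) (J : Submodule F (U × F)) :
    mulSub (mulP b) I J = ⊥ := by
  refine eq_bot_iff.2 (Submodule.span_le.2 ?_)
  rintro _ ⟨p, hp, q, -, rfl⟩
  have hp₁ : p.1 = 0 := by simpa [Submodule.mem_prod] using hI hp
  simp [hp₁]

theorem mulSub_mulP_eq_bot_of_le_right (I : Submodule F (U × F)) {J : Submodule F (U × F)}
    (hJ : J ≤ (⊥ : Submodule F U).prod ⊤) : mulSub (mulP b) I J = ⊥ := by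
  refine eq_bot_iff.2 (Submodule.span_le.2 ?_)
  rintro _ ⟨p, -, q, hq, rfl⟩
  have hq₁ : q.1 = 0 := by simpa [Submodule.mem_prod] using hJ hq
  simp [hq₁]

theorem apow_mulP_one_le : apow (mulP b) 1 ≤ (⊥ : Submodule F U).prod ⊤ := by
  rw [apow]
  exact iSup_le fun _ => mulSub_mulP_le b _ _

theorem apow_mulP_two : apow (mulP b) 2 = ⊥ := by
  rw [apow, eq_bot_iff]
  refine iSup_le fun i => ?_
  fin_cases i
  · exact (mulSub_mulP_eq_bot_of_le_right b _ (apow_mulP_one_le b)).le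
  · exact (mulSub_mulP_eq_bot_of_le_left b (apow_mulP_one_le b) _).le

theorem annA_mulP (hnd : ∀ x, (∀ y, b x y = 0) → x = 0) :
    annA (mulP b) = (⊥ : Submodule F U).prod ⊤ := by
  ext p
  simp only [annA, annOver, mulP_apply, Submodule.mem_bot, Prod.mk_eq_zero, true_and,
    Prod.forall, forall_const, Submodule.mem_mk, AddSubmonoid.mem_mk, AddSubsemigroup.mem_mk,
    Set.mem_ofPred_eq, Submodule.mem_prod, Submodule.mem_top, and_true]
  exact ⟨fun h => hnd p.1 fun y => (h y).1, fun h y => by simp [h]⟩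

theorem annOver_mulP_prod_bot_top : annOver (mulP b) ((⊥ : Submodule F U).prod ⊤) = ⊤ :=
  eq_top_iff.2 fun p _ q => ⟨mulP_mem_prod_bot_top b p q, mulP_mem_prod_bot_top b q p⟩

end

theorem stmt7_general {F U : Type*} [Field F] (hchar : (2 : F) ≠ 0)
    [AddCommGroup U] [Module F U] [FiniteDimensional F U]
    (b : U →ₗ[F] U →ₗ[F] F)
    (hsymm : ∀ x y, b x y = b y x)
    (hnd : ∀ x, (∀ y, b x y = 0) → x = 0) :
    IsEvolutionAlg (mulP b) ∧ IsNilpotentAlg (mulP b) ∧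
      annA (mulP b) = Submodule.prod (⊥ : Submodule F U) (⊤ : Submodule F F) ∧
      annSeries (mulP b) 2 = ⊤ := by
  have : Invertible (2 : F) := invertibleOfNonzero hchar
  have hann := annA_mulP b hnd
  refine ⟨isEvolutionAlg_mulP b hsymm, ⟨2, apow_mulP_two b⟩, hann, ?_⟩
  change annOver (mulP b) (annA (mulP b)) = ⊤
  rw [hann, annOver_mulP_prod_bot_top]

/-- `E(U,b)` is a nilpotent evolution algebra with `Ann(E) = 0 × F` and `Ann²(E) = E`. -/
theorem stmt7 {F U : Type*} [Field F] (hchar : (2 : F) ≠ 0)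
    [AddCommGroup U] [Module F U] [FiniteDimensional F U]
    (hU : 1 ≤ Module.finrank F U)
    (b : U →ₗ[F] U →ₗ[F] F)
    (hsymm : ∀ x y, b x y = b y x)
    (hnd : ∀ x, (∀ y, b x y = 0) → x = 0) :
    IsEvolutionAlg (mulP b) ∧ IsNilpotentAlg (mulP b) ∧
      annA (mulP b) = Submodule.prod (⊥ : Submodule F U) (⊤ : Submodule F F) ∧
      annSeries (mulP b) 2 = ⊤ :=
  stmt7_general hchar b hsymm hnd
end

section
/- Let U be a finite-dimensional vector space over a field F of characteristic ≠ 2, b a nondegenerate symmetric bilinear form on U, and g : U → U a b-symmetric diagonalizable endomorphism. Define E(U,b,g) = U × F × F with multiplication (u,α,β)(v,γ,δ) = (0, b(u,v), b(g(u),v) + αγ). Then E(U,b,g) is a nilpotent evolution algebra with Ann(E) = 0×0×F, Ann²(E) = 0×F×F, and Ann³(E) = E. -/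
variable {F A : Type*} [Field F] [AddCommGroup A] [Module F A]

variable {F U : Type*} [Field F] [AddCommGroup U] [Module F U]

/-!
Eigenspaces of the `b`-symmetric map `g` for distinct eigenvalues are `b`-orthogonal, so gluing
`b`-orthogonal bases of the eigenspaces gives an eigenbasis of `U` that is orthogonal both for `b`
and for `b (g ·) ·`; together with `(0,1,0)` and `(0,0,1)` it is a natural basis of `E`.
Every product lies in `0 × F × F`, a product with a factor in `0 × F × F` lies in `0 × 0 × F`,
and `0 × 0 × F` annihilates `E`; nondegeneracy of `b` shows that these are exactly the terms of
the upper annihilating series. An algebra whose upper annihilating series reaches the whole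
algebra is nilpotent.
-/

open Module

section Eigenbasis

variable {F U : Type*} [Field F] [AddCommGroup U] [Module F U]
  {b : LinearMap.BilinForm F U} {g : End F U}

theorem iSup_eigenspace_eq_top_of_basis {ι : Type*} (v : Basis ι F U) (μ : ι → F)
    (hv : ∀ i, g (v i) = μ i • v i) : ⨆ μ, g.eigenspace μ = ⊤ := by
  rw [eq_top_iff, ← v.span_eq, Submodule.span_le]
  rintro _ ⟨i, rfl⟩
  exact Submodule.mem_iSup_of_mem (μ i) (End.mem_eigenspace_iff.mpr (hv i))

theorem bilin_eq_zero_of_mem_eigenspace (hgsym : ∀ x y, b (g x) y = b x (g y))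
    {μ ν : F} (hμν : μ ≠ ν) {x y : U} (hx : x ∈ g.eigenspace μ) (hy : y ∈ g.eigenspace ν) :
    b x y = 0 := by
  have h := hgsym x y
  rw [End.mem_eigenspace_iff.mp hx, End.mem_eigenspace_iff.mp hy, map_smul, map_smul,
    LinearMap.smul_apply, smul_eq_mul, smul_eq_mul] at h
  have : (μ - ν) * b x y = 0 := by linear_combination h
  exact (mul_eq_zero.mp this).resolve_left (sub_ne_zero.mpr hμν)

theorem exists_orthogonal_eigenbasis [FiniteDimensional F U] (hchar : (2 : F) ≠ 0)
    (hsymm : ∀ x y, b x y = b y x) (hgsym : ∀ x y, b (g x) y = b x (g y))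
    (hdiag : ⨆ μ, g.eigenspace μ = ⊤) :
    ∃ (v : Basis (Fin (finrank F U)) F U) (μ : Fin (finrank F U) → F),
      (∀ i j, i ≠ j → b (v i) (v j) = 0) ∧ ∀ i, g (v i) = μ i • v i := by
  classical
  have := invertibleOfNonzero hchar
  have hint : DirectSum.IsInternal g.eigenspace :=
    DirectSum.isInternal_submodule_of_iSupIndep_of_iSup_eq_top g.eigenspaces_iSupIndep hdiag
  choose w hw using fun μ => LinearMap.BilinForm.exists_orthogonal_basis
    (B := b.restrict (g.eigenspace μ)) ⟨fun x y => hsymm x y⟩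
  set v := hint.collectedBasis w
  have hvorth : ∀ a a', a ≠ a' → b (v a) (v a') = 0 := by
    rintro ⟨μ, k⟩ ⟨ν, l⟩ hne
    by_cases hμν : μ = ν
    · subst hμν
      have hkl : k ≠ l := by rintro rfl; exact hne rfl
      simpa [v, hint.collectedBasis_coe] using hw μ hkl
    · exact bilin_eq_zero_of_mem_eigenspace hgsym hμν (hint.collectedBasis_mem w ⟨μ, k⟩)
        (hint.collectedBasis_mem w ⟨ν, l⟩)
  set e := v.indexEquiv (finBasis F U)
  refine ⟨v.reindex e, fun i => (e.symm i).1, fun i j hij => ?_, fun i => ?_⟩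
  · simpa using hvorth _ _ (e.symm.injective.ne hij)
  · simpa only [Basis.reindex_apply] using
      End.mem_eigenspace_iff.mp (hint.collectedBasis_mem w (e.symm i))

end Eigenbasis

section Annihilators

variable {F A : Type*} [Field F] [AddCommGroup A] [Module F A] (m : Mul2 F A)

theorem mulSub_le {I J N : Submodule F A} (h : ∀ x ∈ I, ∀ y ∈ J, m x y ∈ N) :
    mulSub m I J ≤ N := by
  rw [mulSub, Submodule.span_le]
  rintro _ ⟨x, hx, y, hy, rfl⟩
  exact h x hx y hy

theorem mem_annOver {N : Submodule F A} {x : A} :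
    x ∈ annOver m N ↔ ∀ y, m x y ∈ N ∧ m y x ∈ N :=
  Iff.rfl

theorem mul_mem_annSeries_pred {k : ℕ} {x : A} (hx : x ∈ annSeries m k) (y : A) :
    m x y ∈ annSeries m (k - 1) ∧ m y x ∈ annSeries m (k - 1) := by
  cases k with
  | zero =>
    rw [annSeries, Submodule.mem_bot] at hx
    simp [hx]
  | succ k => exact hx y

/-- A product of `2 ^ d` factors has a factor tree of depth at least `d`, and each level of
multiplication moves one step down the upper annihilating series. -/
theorem apow_le_annSeries {k : ℕ} (hk : annSeries m k = ⊤) {n d : ℕ} (hn : 2 ^ d ≤ n + 1) :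
    apow m n ≤ annSeries m (k - d) := by
  induction n using Nat.strong_induction_on generalizing d with
  | _ n ih =>
    cases d with
    | zero => exact hk ▸ le_top
    | succ d =>
      have hd := Nat.one_le_two_pow (n := d)
      rw [pow_succ] at hn
      obtain ⟨n, rfl⟩ : ∃ n', n = n' + 1 := ⟨n - 1, by omega⟩
      rw [apow, Nat.sub_add_eq]
      refine iSup_le fun i => mulSub_le m fun x hx y hy => ?_
      rcases le_or_gt (2 ^ d) (i.1 + 1) with hi | hi
      · exact (mul_mem_annSeries_pred m (ih i (by omega) hi hx) y).1
      · exact (mul_mem_annSeries_pred m (ih (n - i) (by omega) (by omega) hy) x).2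

theorem isNilpotentAlg_of_annSeries_eq_top {k : ℕ} (hk : annSeries m k = ⊤) :
    IsNilpotentAlg m := by
  refine ⟨2 ^ k - 1, le_bot_iff.mp ?_⟩
  simpa [annSeries] using apow_le_annSeries m hk (n := 2 ^ k - 1) (d := k)
    (by have := Nat.one_le_two_pow (n := k); omega)

end Annihilators

section Triple

variable {F U : Type*} [Field F] [AddCommGroup U] [Module F U]
  (b : U →ₗ[F] U →ₗ[F] F) (g : U →ₗ[F] U)

theorem mulT_apply (p q : U × F × F) :
    mulT b g p q = (0, b p.1 q.1, b (g p.1) q.1 + p.2.1 * q.2.1) := rfl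

theorem mulT_comm (hsymm : ∀ x y, b x y = b y x) (hgsym : ∀ x y, b (g x) y = b x (g y))
    (p q : U × F × F) : mulT b g p q = mulT b g q p := by
  simp only [mulT_apply, hsymm p.1, hgsym, mul_comm p.2.1]

theorem naturalBasis_mulT_prod {ι : Type*} (v : Basis ι F U) (μ : ι → F)
    (horth : ∀ i j, i ≠ j → b (v i) (v j) = 0) (heig : ∀ i, g (v i) = μ i • v i) :
    NaturalBasis (mulT b g) (v.prod ((Basis.singleton Unit F).prod (Basis.singleton Unit F))) := by
  rintro (i | _ | _) (j | _ | _) hij <;>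
    simp_all [mulT_apply, Basis.prod_apply, Prod.ext_iff]

theorem isEvolutionAlg_mulT [FiniteDimensional F U] (hchar : (2 : F) ≠ 0)
    (hsymm : ∀ x y, b x y = b y x) (hgsym : ∀ x y, b (g x) y = b x (g y))
    (hdiag : ⨆ μ, End.eigenspace g μ = ⊤) : IsEvolutionAlg (mulT b g) := by
  obtain ⟨v, μ, horth, heig⟩ := exists_orthogonal_eigenbasis hchar hsymm hgsym hdiag
  exact ⟨mulT_comm b g hsymm hgsym, _, inferInstance, _, naturalBasis_mulT_prod b g v μ horth heig⟩

theorem annSeries_one_mulT (hnd : ∀ x, (∀ y, b x y = 0) → x = 0) :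
    annSeries (mulT b g) 1 =
      Submodule.prod (⊥ : Submodule F U) (Submodule.prod (⊥ : Submodule F F) ⊤) := by
  ext ⟨u, α, β⟩
  simp only [annSeries, mem_annOver, Submodule.mem_prod, Submodule.mem_bot, Submodule.mem_top,
    mulT_apply, Prod.mk_eq_zero, and_true]
  constructor
  · intro h
    refine ⟨hnd u fun y => (h (y, 0, 0)).1.2.1, ?_⟩
    simpa using (h (0, 1, 0)).1.2.2
  · rintro ⟨rfl, rfl⟩ y
    simp

theorem annSeries_two_mulT (hnd : ∀ x, (∀ y, b x y = 0) → x = 0) :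
    annSeries (mulT b g) 2 = Submodule.prod (⊥ : Submodule F U) ⊤ := by
  ext ⟨u, α, β⟩
  rw [annSeries, annSeries_one_mulT b g hnd]
  simp only [mem_annOver, Submodule.mem_prod, Submodule.mem_bot, Submodule.mem_top,
    mulT_apply, and_true, true_and]
  constructor
  · exact fun h => hnd u fun y => (h (y, 0, 0)).1
  · rintro rfl y
    simp

theorem annSeries_three_mulT (hnd : ∀ x, (∀ y, b x y = 0) → x = 0) :
    annSeries (mulT b g) 3 = ⊤ := by
  rw [eq_top_iff, annSeries, annSeries_two_mulT b g hnd]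
  intro x _ y
  simp [Submodule.mem_prod, mulT_apply]

end Triple

theorem stmt9_general {F U : Type*} [Field F] (hchar : (2 : F) ≠ 0)
    [AddCommGroup U] [Module F U] [FiniteDimensional F U]
    (b : U →ₗ[F] U →ₗ[F] F)
    (hsymm : ∀ x y, b x y = b y x)
    (hnd : ∀ x, (∀ y, b x y = 0) → x = 0)
    (g : U →ₗ[F] U)
    (hgsym : ∀ x y, b (g x) y = b x (g y))
    (hgdiag : ∃ (ι : Type) (_ : Fintype ι) (v : Module.Basis ι F U) (μ : ι → F),
      ∀ i, g (v i) = μ i • v i) :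
    IsEvolutionAlg (mulT b g) ∧ IsNilpotentAlg (mulT b g) ∧
      annSeries (mulT b g) 1 =
        Submodule.prod (⊥ : Submodule F U)
          (Submodule.prod (⊥ : Submodule F F) (⊤ : Submodule F F)) ∧
      annSeries (mulT b g) 2 =
        Submodule.prod (⊥ : Submodule F U) (⊤ : Submodule F (F × F)) ∧
      annSeries (mulT b g) 3 = ⊤ := by
  obtain ⟨ι, _, v, μ, hv⟩ := hgdiag
  have hann3 := annSeries_three_mulT b g hnd
  exact ⟨isEvolutionAlg_mulT b g hchar hsymm hgsym (iSup_eigenspace_eq_top_of_basis v μ hv),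
    isNilpotentAlg_of_annSeries_eq_top _ hann3, annSeries_one_mulT b g hnd,
    annSeries_two_mulT b g hnd, hann3⟩

/-- `E(U,b,g)` is a nilpotent evolution algebra with
`Ann(E) = 0×0×F`, `Ann²(E) = 0×F×F` and `Ann³(E) = E`. -/
theorem stmt9 {F U : Type*} [Field F] (hchar : (2 : F) ≠ 0)
    [AddCommGroup U] [Module F U] [FiniteDimensional F U]
    (hU : 1 ≤ Module.finrank F U)
    (b : U →ₗ[F] U →ₗ[F] F)
    (hsymm : ∀ x y, b x y = b y x)
    (hnd : ∀ x, (∀ y, b x y = 0) → x = 0)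
    (g : U →ₗ[F] U)
    (hgsym : ∀ x y, b (g x) y = b x (g y))
    (hgdiag : ∃ (ι : Type) (_ : Fintype ι) (v : Module.Basis ι F U) (μ : ι → F),
      ∀ i, g (v i) = μ i • v i) :
    IsEvolutionAlg (mulT b g) ∧ IsNilpotentAlg (mulT b g) ∧
      annSeries (mulT b g) 1 =
        Submodule.prod (⊥ : Submodule F U)
          (Submodule.prod (⊥ : Submodule F F) (⊤ : Submodule F F)) ∧
      annSeries (mulT b g) 2 =
        Submodule.prod (⊥ : Submodule F U) (⊤ : Submodule F (F × F)) ∧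
      annSeries (mulT b g) 3 = ⊤ :=
  stmt9_general hchar b hsymm hnd g hgsym hgdiag
end

section
/- Let E(U,b,f,g) = U × F × F × F with product (u,α,β,γ)(v,ε,δ,η) = (0, b(u,v), b(f(u),v)+αε, b(g(u),v)+βδ), where f,g are commuting b-symmetric diagonalizable endomorphisms of U. Then for any α, β ∈ F with α ≠ 0, E(U,b,f,g) is isomorphic as an algebra to E(U, αb, αf, α³g + β·id). -/
variable {F A : Type*} [Field F] [AddCommGroup A] [Module F A]

variable {F U : Type*} [Field F] [AddCommGroup U] [Module F U]

/-!
The isomorphism is the identity on `U` and multiplies the three scalar coordinates by `α`, `α²`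
and `α⁴`, which turns `b, f, g` into `αb, αf, α³g`. The second coordinate of a product is
`b(u,v)`, so adding `αβ` times the second coordinate to the fourth one contributes
`αβ·b(u,v) = (αb)((β·id) u, v)` to the fourth coordinate, which is the `β·id` part of the new `g`.
The maps of this shape form a group, which gives the inverse.
-/

def rescaleQ (α β : F) : (U × F × F × F) →ₗ[F] (U × F × F × F) where
  toFun p := (p.1, α * p.2.1, α ^ 2 * p.2.2.1, α ^ 4 * p.2.2.2 + α * β * p.2.1)
  map_add' p q := by ext <;> simp <;> ring
  map_smul' c p := by ext <;> simp <;> ring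

@[simp]
theorem rescaleQ_apply (α β : F) (p : U × F × F × F) :
    rescaleQ α β p = (p.1, α * p.2.1, α ^ 2 * p.2.2.1, α ^ 4 * p.2.2.2 + α * β * p.2.1) :=
  rfl

theorem rescaleQ_comp_rescaleQ (α β α' β' : F) :
    (rescaleQ α β).comp (rescaleQ α' β') = (rescaleQ (α * α') (α ^ 3 * β' + β) :
      (U × F × F × F) →ₗ[F] (U × F × F × F)) := by
  ext p <;> simp <;> ring

theorem rescaleQ_one_zero : (rescaleQ 1 0 : (U × F × F × F) →ₗ[F] (U × F × F × F)) = .id := by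
  ext p <;> simp

def rescaleQEquiv {α : F} (β : F) (hα : α ≠ 0) : (U × F × F × F) ≃ₗ[F] (U × F × F × F) :=
  .ofLinearMap (rescaleQ α β) (rescaleQ α⁻¹ (-β / α ^ 3))
    (by rw [rescaleQ_comp_rescaleQ, ← rescaleQ_one_zero]; congr 1 <;> grind)
    (by rw [rescaleQ_comp_rescaleQ, ← rescaleQ_one_zero]; congr 1 <;> grind)

theorem rescaleQ_mulQ (b : U →ₗ[F] U →ₗ[F] F) (f g : U →ₗ[F] U) (α β : F)
    (p q : U × F × F × F) :
    rescaleQ α β (mulQ b f g p q) =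
      mulQ (α • b) (α • f) (α ^ 3 • g + β • LinearMap.id) (rescaleQ α β p) (rescaleQ α β q) := by
  ext <;> simp [mulQ] <;> ring

theorem stmt13_general {F U : Type*} [Field F]
    [AddCommGroup U] [Module F U]
    (b : U →ₗ[F] U →ₗ[F] F)
    (f g : U →ₗ[F] U)
    (α β : F) (hα : α ≠ 0) :
    ∃ e : (U × F × F × F) ≃ₗ[F] (U × F × F × F),
      ∀ p q, e (mulQ b f g p q) =
        mulQ (α • b) (α • f) (α ^ 3 • g + β • LinearMap.id) (e p) (e q) :=
  ⟨rescaleQEquiv β hα, rescaleQ_mulQ b f g α β⟩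

/-- `E(U,b,f,g)` is isomorphic to `E(U, αb, αf, α³g + β·id)` for `α ≠ 0`. -/
theorem stmt13 {F U : Type*} [Field F] (hchar : (2 : F) ≠ 0)
    [AddCommGroup U] [Module F U] [FiniteDimensional F U]
    (b : U →ₗ[F] U →ₗ[F] F)
    (hsymm : ∀ x y, b x y = b y x)
    (hnd : ∀ x, (∀ y, b x y = 0) → x = 0)
    (f g : U →ₗ[F] U)
    (hfg : f ∘ₗ g = g ∘ₗ f)
    (hfsym : ∀ x y, b (f x) y = b x (f y))
    (hgsym : ∀ x y, b (g x) y = b x (g y))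
    (hdiag : ∃ (ι : Type) (_ : Fintype ι) (v : Module.Basis ι F U) (μ ν : ι → F),
      (∀ i j, i ≠ j → b (v i) (v j) = 0) ∧
      (∀ i, f (v i) = μ i • v i) ∧ (∀ i, g (v i) = ν i • v i))
    (α β : F) (hα : α ≠ 0) :
    ∃ e : (U × F × F × F) ≃ₗ[F] (U × F × F × F),
      ∀ p q, e (mulQ b f g p q) =
        mulQ (α • b) (α • f) (α ^ 3 • g + β • LinearMap.id) (e p) (e q) :=
  stmt13_general b f g α β hα
end
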